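/- arXiv:0712.0681 — 6 statements merged into one kernel-verified Lean document; each statement's English description precedes it below -/
import Mathlib

section
/- For every nonzero complex number z, det M(z) = ((-1)^{nm} / (-z)^m) · det(T - z I_{2m}) · det(B_1 ⋯ B_n). -/
open Matrix

/-- The transfer matrix `T(k) = E_k ⋯ E_1` where
`E_i = [[-B_i⁻¹ A_i, -B_i⁻¹ C_{i-1}], [I_m, 0]]`. -/
noncomputable def transfer (m : ℕ) (A B C : ℕ → Matrix (Fin m) (Fin m) ℂ) :
    ℕ → Matrix (Fin m ⊕ Fin m) (Fin m ⊕ Fin m) ℂ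
  | 0 => 1
  | k + 1 =>
      Matrix.fromBlocks (-(B (k + 1))⁻¹ * A (k + 1)) (-(B (k + 1))⁻¹ * C k) 1 0 *
        transfer m A B C k

/-- The `nm × nm` block tridiagonal matrix `M(z)` with diagonal blocks `A_1, …, A_n`,
superdiagonal blocks `B_1, …, B_{n-1}`, subdiagonal blocks `C_1, …, C_{n-1}`,
corner block `z⁻¹ C_0` in block position `(1, n)` and corner block `z B_n` in block
position `(n, 1)`.  Block row/column indices are `0`-based (`i : Fin n` codes the
paper's index `i+1`). -/
noncomputable def cornerMat (m n : ℕ) (z : ℂ) (A B C : ℕ → Matrix (Fin m) (Fin m) ℂ) :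
    Matrix (Fin n × Fin m) (Fin n × Fin m) ℂ :=
  fun p q =>
    (if (p.1 : ℕ) = q.1 then A (p.1 + 1) p.2 q.2 else 0) +
    (if (q.1 : ℕ) = p.1 + 1 then B (p.1 + 1) p.2 q.2 else 0) +
    (if (p.1 : ℕ) = q.1 + 1 then C p.1 p.2 q.2 else 0) +
    (if (p.1 : ℕ) = 0 ∧ (q.1 : ℕ) = n - 1 then z⁻¹ * C 0 p.2 q.2 else 0) +
    (if (p.1 : ℕ) = n - 1 ∧ (q.1 : ℕ) = 0 then z * B n p.2 q.2 else 0)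

/-!
Put `w = z⁻¹`, let `E_j` be the factors of `T` and `D_j = diag(B_j, 1)`, and consider the
cyclic block bidiagonal matrix `K` with `2m × 2m` diagonal blocks `D_j`, subdiagonal blocks
`-D_j E_j` and corner block `-w D_1 E_1`. On the one hand `K = diag(D_j) · K'` with `K'` of the
same shape with identity diagonal, and eliminating the first block row and column of `K'` over
and over multiplies the corner up to `det K' = det(1 - w E_n ⋯ E_1) = det(1 - w T)`. On the
other hand `D_j E_j = [[-A_j, -C_{j-1}], [1, 0]]`, so after splitting every block index into its
two halves `K` becomes `[[P, Q], [-S, 1]]`, where `S` is the block shift with twist `w`; its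
Schur complement is `P + Q S = M(z) S`, and `det S = ((-1)^{n-1} w)^m`.
-/

open Kronecker

namespace TransferMatrix

variable {R : Type*} {α β κ : Type*}

/-- Blocks are indexed by `ℕ` so that index arithmetic stays in `ℕ`; only the values at
`i, j < k` matter. -/
def ofBlocks (k : ℕ) (f : ℕ → ℕ → Matrix α β R) : Matrix (Fin k × α) (Fin k × β) R :=
  fun p q => f p.1 q.1 p.2 q.2

theorem ofBlocks_congr {k : ℕ} {f g : ℕ → ℕ → Matrix α β R}
    (h : ∀ i < k, ∀ j < k, f i j = g i j) : ofBlocks k f = ofBlocks k g := by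
  ext ⟨i, a⟩ ⟨j, b⟩
  simp only [ofBlocks, h i i.isLt j j.isLt]

theorem submatrix_ofBlocks_fromBlocks {α' β' : Type*} (k : ℕ) (a : ℕ → ℕ → Matrix α β R)
    (b : ℕ → ℕ → Matrix α β' R) (c : ℕ → ℕ → Matrix α' β R) (d : ℕ → ℕ → Matrix α' β' R) :
    (ofBlocks k fun i j => fromBlocks (a i j) (b i j) (c i j) (d i j)).submatrix
        (Equiv.prodSumDistrib _ _ _).symm (Equiv.prodSumDistrib _ _ _).symm =
      fromBlocks (ofBlocks k a) (ofBlocks k b) (ofBlocks k c) (ofBlocks k d) := by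
  ext (⟨i, x⟩ | ⟨i, x⟩) (⟨j, y⟩ | ⟨j, y⟩) <;> rfl

theorem ofBlocks_mul [Semiring R] [Fintype β] {γ : Type*} (k : ℕ) (f : ℕ → ℕ → Matrix α β R)
    (g : ℕ → ℕ → Matrix β γ R) :
    ofBlocks k f * ofBlocks k g =
      ofBlocks k fun i j => ∑ l ∈ Finset.range k, f i l * g l j := by
  ext ⟨i, a⟩ ⟨j, c⟩
  simp only [ofBlocks, mul_apply, Fintype.sum_prod_type, Matrix.sum_apply]
  exact Fin.sum_univ_eq_sum_range (fun l => ∑ b, f i l a b * g l j b c) k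

theorem ofBlocks_diagonal_mul [Semiring R] [Fintype α] [DecidableEq α] (k : ℕ)
    (D : ℕ → Matrix α α R) (f : ℕ → ℕ → Matrix α β R) :
    ofBlocks k (fun i j => if i = j then D i else 0) * ofBlocks k f =
      ofBlocks k fun i j => D i * f i j := by
  rw [ofBlocks_mul]
  refine ofBlocks_congr fun i hi j _ => ?_
  rw [Finset.sum_eq_single i (fun l _ hl => by rw [if_neg hl.symm, Matrix.zero_mul])
    (fun h => absurd (Finset.mem_range.2 hi) h), if_pos rfl]

theorem det_ofBlocks_diagonal [CommRing R] [Fintype κ] [DecidableEq κ] (k : ℕ)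
    (D : ℕ → Matrix κ κ R) :
    (ofBlocks k fun i j => if i = j then D i else 0).det = ∏ i ∈ Finset.range k, (D i).det := by
  have h : ofBlocks k (fun i j => if i = j then D i else 0) =
      (blockDiagonal fun i : Fin k => D i).submatrix (Equiv.prodComm _ _)
        (Equiv.prodComm _ _) := by
    ext ⟨i, a⟩ ⟨j, b⟩
    simp [ofBlocks, blockDiagonal_apply, Fin.val_inj, apply_ite (fun M : Matrix κ κ R => M a b)]
  rw [h, det_submatrix_equiv_self, det_blockDiagonal,
    Fin.prod_univ_eq_prod_range (fun i => (D i).det)]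

theorem det_ofBlocks_one [CommRing R] [Fintype κ] [DecidableEq κ] (f : ℕ → ℕ → Matrix κ κ R) :
    (ofBlocks 1 f).det = (f 0 0).det := by
  rw [← det_submatrix_equiv_self (Equiv.uniqueProd κ (Fin 1)).symm]
  rfl

theorem det_ofBlocks_succ [CommRing R] [Fintype κ] [DecidableEq κ] (k : ℕ)
    (f : ℕ → ℕ → Matrix κ κ R) (h : f 0 0 = 1) :
    (ofBlocks (k + 1) f).det =
      (ofBlocks k fun i j => f (i + 1) (j + 1) - f (i + 1) 0 * f 0 (j + 1)).det := by
  let e : κ ⊕ Fin k × κ ≃ Fin (k + 1) × κ :=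
    (((finSuccEquiv k).prodCongr (Equiv.refl κ)).trans optionProdEquiv).symm
  have hblocks : (ofBlocks (k + 1) f).submatrix e e =
      fromBlocks (f 0 0) (of fun a q => f 0 (q.1 + 1) a q.2) (of fun p b => f (p.1 + 1) 0 p.2 b)
        (ofBlocks k fun i j => f (i + 1) (j + 1)) := by
    ext (a | ⟨i, a⟩) (b | ⟨j, b⟩) <;> rfl
  rw [← det_submatrix_equiv_self e, hblocks, h, det_fromBlocks_one₁₁]
  rfl

theorem det_list_prod_map_range [CommRing R] [Fintype κ] [DecidableEq κ]
    (f : ℕ → Matrix κ κ R) (k : ℕ) :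
    ((List.range k).map f).prod.det = ∏ i ∈ Finset.range k, (f i).det := by
  rw [← coe_detMonoidHom, map_list_prod, List.map_map, Finset.prod_eq_multiset_prod,
    Finset.range_val, Multiset.range, Multiset.map_coe, Multiset.prod_coe]
  rfl

def cyclicBidiag [Ring R] (w : R) (k : ℕ) (D X : ℕ → Matrix α β R) : ℕ → ℕ → Matrix α β R :=
  fun i j => (if i = j then D i else 0) - (if i = j + 1 then X i else 0) -
    if i = 0 ∧ j = k - 1 then w • X 0 else 0

def prodDesc [Semiring R] [Fintype κ] [DecidableEq κ] (X : ℕ → Matrix κ κ R) :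
    ℕ → Matrix κ κ R
  | 0 => 1
  | k + 1 => X k * prodDesc X k

theorem prodDesc_merge_first [Semiring R] [Fintype κ] [DecidableEq κ] (X : ℕ → Matrix κ κ R)
    (k : ℕ) :
    prodDesc (fun i => if i = 0 then X 1 * X 0 else X (i + 1)) (k + 1) = prodDesc X (k + 2) := by
  induction k with
  | zero => simp [prodDesc]
  | succ k ih => rw [prodDesc, ih, if_neg k.succ_ne_zero]; rfl

theorem det_ofBlocks_cyclicBidiag_one [CommRing R] [Fintype κ] [DecidableEq κ] (w : R) (k : ℕ)
    (X : ℕ → Matrix κ κ R) :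
    (ofBlocks (k + 1) (cyclicBidiag w (k + 1) 1 X)).det = (1 - w • prodDesc X (k + 1)).det := by
  induction k generalizing X with
  | zero => simp [det_ofBlocks_one, cyclicBidiag, prodDesc]
  | succ k ih =>
    rw [det_ofBlocks_succ _ _ (by simp [cyclicBidiag]), ← prodDesc_merge_first, ← ih]
    refine congrArg det (ofBlocks_congr fun i hi j hj => ?_)
    simp only [cyclicBidiag, Pi.one_apply, Nat.add_sub_cancel, Nat.succ_ne_zero, false_and,
      if_false]
    split_ifs <;> first | (exfalso; omega) | simp_all

theorem cyclicBidiag_fromBlocks [Ring R] {α' β' : Type*} (w : R) (k : ℕ)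
    (D₁ X₁ : ℕ → Matrix α β R) (D₂ X₂ : ℕ → Matrix α β' R) (D₃ X₃ : ℕ → Matrix α' β R)
    (D₄ X₄ : ℕ → Matrix α' β' R) :
    cyclicBidiag w k (fun i => fromBlocks (D₁ i) (D₂ i) (D₃ i) (D₄ i))
        (fun i => fromBlocks (X₁ i) (X₂ i) (X₃ i) (X₄ i)) =
      fun i j => fromBlocks (cyclicBidiag w k D₁ X₁ i j) (cyclicBidiag w k D₂ X₂ i j)
        (cyclicBidiag w k D₃ X₃ i j) (cyclicBidiag w k D₄ X₄ i j) := by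
  ext i j : 2
  simp only [cyclicBidiag]
  split_ifs <;> simp [sub_eq_add_neg, fromBlocks_neg, fromBlocks_add, fromBlocks_smul]

theorem ofBlocks_diagonal_mul_cyclicBidiag [CommRing R] [Fintype κ] [DecidableEq κ] (w : R) (k : ℕ)
    (D X Y : ℕ → Matrix κ κ R) (h : ∀ i < k, D i * X i = Y i) :
    ofBlocks k (fun i j => if i = j then D i else 0) * ofBlocks k (cyclicBidiag w k 1 X) =
      ofBlocks k (cyclicBidiag w k D Y) := by
  rw [ofBlocks_diagonal_mul]
  refine ofBlocks_congr fun i hi j _ => ?_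
  simp only [cyclicBidiag, Pi.one_apply, mul_sub]
  rcases eq_or_ne i 0 with rfl | hi0
  · split_ifs <;> simp [h 0 hi]
  · simp [hi0, h i hi]

def twistedShift [Semiring R] (w : R) (k : ℕ) : Matrix (Fin k) (Fin k) R :=
  of fun i j => (if (i : ℕ) = j + 1 then 1 else 0) + if (i : ℕ) = 0 ∧ (j : ℕ) = k - 1 then w else 0

theorem twistedShift_kronecker_one [Semiring R] [DecidableEq κ] (w : R) (k : ℕ) :
    twistedShift w k ⊗ₖ (1 : Matrix κ κ R) =
      ofBlocks k fun i j =>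
        ((if i = j + 1 then 1 else 0) + if i = 0 ∧ j = k - 1 then w else 0) • 1 := by
  ext ⟨i, a⟩ ⟨j, b⟩
  simp [ofBlocks, twistedShift, one_apply]

theorem ofBlocks_mul_twistedShift [CommSemiring R] [Fintype β] [DecidableEq β] (w : R) (k : ℕ)
    (f : ℕ → ℕ → Matrix α β R) :
    ofBlocks k f * (twistedShift w k ⊗ₖ (1 : Matrix β β R)) =
      ofBlocks k fun i j => (if j + 1 < k then f i (j + 1) else 0) +
        if j = k - 1 then w • f i 0 else 0 := by
  rw [twistedShift_kronecker_one, ofBlocks_mul]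
  refine ofBlocks_congr fun i _ j hj => ?_
  simp only [Matrix.mul_smul, Matrix.mul_one]
  simp only [add_smul, ite_smul, one_smul, zero_smul, Finset.sum_add_distrib, ite_and,
    Finset.sum_ite_eq', Finset.mem_range]
  rw [if_pos (by omega : 0 < k)]

theorem ofBlocks_cyclicBidiag_zero_one [Ring R] [DecidableEq κ] (w : R) (k : ℕ) :
    ofBlocks k (cyclicBidiag w k (fun _ => 0) fun _ => (1 : Matrix κ κ R)) =
      -(twistedShift w k ⊗ₖ 1) := by
  ext ⟨i, a⟩ ⟨j, b⟩
  simp only [ofBlocks, cyclicBidiag, twistedShift]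
  split_ifs <;> simp_all [one_apply]

theorem ofBlocks_cyclicBidiag_one_zero [Ring R] [DecidableEq κ] (w : R) (k : ℕ) :
    ofBlocks k (cyclicBidiag w k (fun _ => (1 : Matrix κ κ R)) fun _ => 0) = 1 := by
  ext ⟨i, a⟩ ⟨j, b⟩
  by_cases h : i = j <;> simp [ofBlocks, cyclicBidiag, one_apply, Fin.val_inj, h]

theorem twistedShift_eq_permMatrix_mul_diagonal [Semiring R] (w : R) (k : ℕ) :
    twistedShift w (k + 1) = (finRotate (k + 1))⁻¹.permMatrix R *
      diagonal fun j => if j = Fin.last k then w else 1 := by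
  ext i j
  rw [mul_diagonal]
  simp only [twistedShift, of_apply, Equiv.Perm.permMatrix, PEquiv.toMatrix_apply,
    Equiv.toPEquiv_apply, Option.mem_def, Option.some.injEq, Equiv.Perm.inv_def,
    Equiv.symm_apply_eq, finRotate_apply]
  rcases eq_or_ne j (Fin.last k) with rfl | hj
  · rw [Fin.last_add_one, Fin.val_last, if_neg i.isLt.ne]
    simp [Fin.val_eq_zero_iff]
  · have hv : ((j + 1 : Fin (k + 1)) : ℕ) = j + 1 :=
      Fin.val_add_one_of_lt (Fin.lt_last_iff_ne_last.2 hj)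
    have hjk : (j : ℕ) ≠ k := fun h => hj (Fin.ext h)
    simp only [Fin.ext_iff (a := i), hv]
    simp [hj, hjk]

theorem det_twistedShift [CommRing R] (w : R) (k : ℕ) :
    (twistedShift w (k + 1)).det = (-1) ^ k * w := by
  rw [twistedShift_eq_permMatrix_mul_diagonal, det_mul, det_permutation, det_diagonal,
    Equiv.Perm.sign_inv, sign_finRotate, Finset.prod_ite_eq' Finset.univ (Fin.last k)]
  simp

section Transfer

variable (m : ℕ) (A B C : ℕ → Matrix (Fin m) (Fin m) ℂ)

noncomputable def transferStep (j : ℕ) : Matrix (Fin m ⊕ Fin m) (Fin m ⊕ Fin m) ℂ :=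
  fromBlocks (-(B (j + 1))⁻¹ * A (j + 1)) (-(B (j + 1))⁻¹ * C j) 1 0

theorem transfer_eq_prodDesc (k : ℕ) :
    transfer m A B C k = prodDesc (transferStep m A B C) k := by
  induction k with
  | zero => rfl
  | succ k ih => rw [transfer, ih]; rfl

theorem fromBlocks_mul_transferStep {j : ℕ} (hB : IsUnit (B (j + 1))) :
    fromBlocks (B (j + 1)) 0 0 1 * transferStep m A B C j =
      fromBlocks (-A (j + 1)) (-C j) 1 0 := by
  have := mul_nonsing_inv _ ((isUnit_iff_isUnit_det _).mp hB)
  simp [transferStep, fromBlocks_multiply, ← Matrix.mul_assoc, this]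

def upperBlocks (n : ℕ) (z : ℂ) : ℕ → ℕ → Matrix (Fin m) (Fin m) ℂ := fun i j =>
  (if i = j then A (i + 1) else 0) + (if j = i + 1 then B (i + 1) else 0) +
    if i = n - 1 ∧ j = 0 then z • B n else 0

theorem cornerMat_eq_ofBlocks (n : ℕ) (z : ℂ) :
    cornerMat m n z A B C =
      ofBlocks n (upperBlocks m A B n z) +
        ofBlocks n (cyclicBidiag z⁻¹ n (fun _ => 0) fun i => -C i) := by
  ext ⟨i, a⟩ ⟨j, b⟩
  simp only [cornerMat, ofBlocks, upperBlocks, cyclicBidiag, Matrix.add_apply, Matrix.sub_apply]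
  split_ifs <;> first | (exfalso; omega) | (simp <;> ring)

theorem upperBlocks_mul_twistedShift (n : ℕ) {z : ℂ} (hz : z ≠ 0) :
    ofBlocks n (upperBlocks m A B n z) * (twistedShift z⁻¹ n ⊗ₖ (1 : Matrix (Fin m) (Fin m) ℂ)) =
      ofBlocks n (cyclicBidiag z⁻¹ n (fun i => B (i + 1)) fun i => -A (i + 1)) := by
  rw [ofBlocks_mul_twistedShift]
  refine ofBlocks_congr fun i hi j hj => ?_
  obtain ⟨n, rfl⟩ : ∃ n', n = n' + 1 := ⟨n - 1, by omega⟩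
  simp only [upperBlocks, cyclicBidiag, Nat.add_sub_cancel, Nat.add_eq_zero_iff, one_ne_zero,
    and_false, if_false, add_zero]
  split_ifs <;> first | (exfalso; omega) | simp_all [smul_smul, add_comm]

theorem det_cornerMat_mul_det_twistedShift (N : ℕ) {z : ℂ} (hz : z ≠ 0)
    (hB : ∀ i, 1 ≤ i → i ≤ N + 1 → IsUnit (B i)) :
    (cornerMat m (N + 1) z A B C).det * (twistedShift z⁻¹ (N + 1)).det ^ m =
      (∏ i ∈ Finset.range (N + 1), (B (i + 1)).det) *
        (1 - z⁻¹ • transfer m A B C (N + 1)).det := by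
  set K := ofBlocks (N + 1) (cyclicBidiag z⁻¹ (N + 1) (fun i => fromBlocks (B (i + 1)) 0 0 1)
    fun i => fromBlocks (-A (i + 1)) (-C i) (1 : Matrix (Fin m) (Fin m) ℂ) 0)
  have hfactor :
      ofBlocks (N + 1) (fun i j => if i = j then fromBlocks (B (i + 1)) 0 0 1 else 0) *
        ofBlocks (N + 1) (cyclicBidiag z⁻¹ (N + 1) 1 (transferStep m A B C)) = K :=
    ofBlocks_diagonal_mul_cyclicBidiag _ _ _ _ _ fun i hi =>
      fromBlocks_mul_transferStep m A B C (hB (i + 1) (by omega) (by omega))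
  have hschur :
      K.det = (cornerMat m (N + 1) z A B C).det * (twistedShift z⁻¹ (N + 1)).det ^ m := by
    simp only [K]
    rw [← det_submatrix_equiv_self (Equiv.prodSumDistrib _ _ _).symm, cyclicBidiag_fromBlocks,
      submatrix_ofBlocks_fromBlocks, ofBlocks_cyclicBidiag_zero_one,
      ofBlocks_cyclicBidiag_one_zero, det_fromBlocks_one₂₂, Matrix.mul_neg, sub_neg_eq_add,
      ← upperBlocks_mul_twistedShift m A B (N + 1) hz, ← Matrix.add_mul,
      ← cornerMat_eq_ofBlocks, det_mul, det_kronecker, det_one, one_pow, mul_one, Fintype.card_fin]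
  rw [← hschur, ← hfactor, det_mul, det_ofBlocks_diagonal, det_ofBlocks_cyclicBidiag_one,
    transfer_eq_prodDesc]
  simp

end Transfer

end TransferMatrix

open TransferMatrix

theorem det_cornerMat_general (m n : ℕ) (hn : 1 ≤ n)
    (A B C : ℕ → Matrix (Fin m) (Fin m) ℂ)
    (hB : ∀ i, 1 ≤ i → i ≤ n → IsUnit (B i))
    (z : ℂ) (hz : z ≠ 0) :
    (cornerMat m n z A B C).det =
      ((-1 : ℂ) ^ (n * m) / (-z) ^ m) *
        (transfer m A B C n - z • (1 : Matrix (Fin m ⊕ Fin m) (Fin m ⊕ Fin m) ℂ)).det *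
        (((List.range n).map (fun k => B (k + 1))).prod).det := by
  obtain ⟨N, rfl⟩ : ∃ N, n = N + 1 := ⟨n - 1, by omega⟩
  set T := transfer m A B C (N + 1)
  have key := det_cornerMat_mul_det_twistedShift m A B C N hz hB
  rw [det_twistedShift] at key
  have hprefactor : (-1 : ℂ) ^ ((N + 1) * m) / (-z) ^ m = ((-1) ^ N * z⁻¹) ^ m := by
    rw [neg_pow z, mul_pow, ← pow_mul, add_mul, one_mul, pow_add, mul_comm N]
    field_simp
    rw [one_div, ← mul_pow, mul_inv_cancel₀ hz, one_pow]
  have hcharpoly : (1 - z⁻¹ • T).det =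
      ((-1) ^ N * z⁻¹) ^ m * ((-1) ^ N * z⁻¹) ^ m * (T - z • 1).det := by
    rw [show 1 - z⁻¹ • T = (-z⁻¹) • (T - z • 1) by
        rw [smul_sub, smul_smul, neg_mul, inv_mul_cancel₀ hz]; module,
      det_smul, Fintype.card_sum, Fintype.card_fin, ← mul_pow, ← two_mul, pow_mul, neg_sq,
      mul_mul_mul_comm, ← pow_add, ← two_mul, pow_mul, neg_one_sq, one_pow, one_mul, sq]
  refine mul_right_cancel₀ (by simp [hz] : ((-1 : ℂ) ^ N * z⁻¹) ^ m ≠ 0) ?_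
  rw [key, hcharpoly, hprefactor, det_list_prod_map_range]
  ring

/-- Lemma 1: `det M(z) = ((-1)^{nm} / (-z)^m) · det (T - z I_{2m}) · det (B_1 ⋯ B_n)`. -/
theorem det_cornerMat (m n : ℕ) (hm : 1 ≤ m) (hn : 1 ≤ n)
    (A B C : ℕ → Matrix (Fin m) (Fin m) ℂ)
    (hB : ∀ i, 1 ≤ i → i ≤ n → IsUnit (B i))
    (hC : ∀ i, i < n → IsUnit (C i))
    (z : ℂ) (hz : z ≠ 0) :
    (cornerMat m n z A B C).det =
      ((-1 : ℂ) ^ (n * m) / (-z) ^ m) *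
        (transfer m A B C n - z • (1 : Matrix (Fin m ⊕ Fin m) (Fin m ⊕ Fin m) ℂ)).det *
        (((List.range n).map (fun k => B (k + 1))).prod).det :=
  det_cornerMat_general m n hn A B C hB z hz
end

section
/- det M⁰ = (-1)^{nm} · det(T⁰₁₁) · det(B_1 ⋯ B_{n-1}), where T⁰₁₁ denotes the upper-left m×m block of the transfer matrix T⁰. -/
open Matrix

/-- The `nm × nm` block tridiagonal matrix `M⁰` (no corners) with diagonal blocks
`A_1, …, A_n`, superdiagonal blocks `B_1, …, B_{n-1}` and subdiagonal blocks
`C_1, …, C_{n-1}`.  Block indices are `0`-based (`i : Fin n` codes the paper's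
index `i+1`). -/
def blockTridiag (m n : ℕ) (A B C : ℕ → Matrix (Fin m) (Fin m) ℂ) :
    Matrix (Fin n × Fin m) (Fin n × Fin m) ℂ :=
  fun p q =>
    (if (p.1 : ℕ) = q.1 then A (p.1 + 1) p.2 q.2 else 0) +
    (if (q.1 : ℕ) = p.1 + 1 then B (p.1 + 1) p.2 q.2 else 0) +
    (if (p.1 : ℕ) = q.1 + 1 then C p.1 p.2 q.2 else 0)

/-- The partial products `T(k)` of the first `k` factors of the transfer matrix `T⁰`:
`T(1) = [[-B_1⁻¹ A_1, -B_1⁻¹], [I_m, 0]]` and, for `k ≥ 2`,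
`T(k) = [[-B_k⁻¹ A_k, -B_k⁻¹ C_{k-1}], [I_m, 0]] · T(k-1)`; we set `T(0) = I_{2m}`. -/
noncomputable def transfer0Aux (m : ℕ) (A B C : ℕ → Matrix (Fin m) (Fin m) ℂ) :
    ℕ → Matrix (Fin m ⊕ Fin m) (Fin m ⊕ Fin m) ℂ
  | 0 => 1
  | 1 => Matrix.fromBlocks (-(B 1)⁻¹ * A 1) (-(B 1)⁻¹) 1 0
  | k + 2 =>
      Matrix.fromBlocks (-(B (k + 2))⁻¹ * A (k + 2)) (-(B (k + 2))⁻¹ * C (k + 1)) 1 0 *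
        transfer0Aux m A B C (k + 1)

/-- The full transfer matrix
`T⁰ = [[-A_n, -C_{n-1}], [I_m, 0]] · T(n-1)` associated with `M⁰`. -/
noncomputable def transfer0 (m n : ℕ) (A B C : ℕ → Matrix (Fin m) (Fin m) ℂ) :
    Matrix (Fin m ⊕ Fin m) (Fin m ⊕ Fin m) ℂ :=
  Matrix.fromBlocks (-(A n)) (-(C (n - 1))) 1 0 * transfer0Aux m A B C (n - 1)

/-!
The first block column of the product of the first `k` transfer factors is `(Y_k, Y_{k-1})`, where
`C_{k-1} Y_{k-2} + A_k Y_{k-1} + B_k Y_k = 0`, `Y_{-1} = 0`, `Y_0 = I`. Hence `M⁰` maps the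
block vector `(Y_0, …, Y_{n-1})` to `(0, …, 0, -T⁰₁₁)`. Multiplying `M⁰` on the right by the
identity with its first block column replaced by this vector (a unipotent block lower triangular
matrix) therefore leaves `M⁰` unchanged except for that column. Cycling the block columns one step
to the left yields a block lower triangular matrix with diagonal blocks `B_1, …, B_{n-1}, -T⁰₁₁`,
and the cycle contributes the sign `(-1)^{(n-1)m}`.
-/

open Finset Equiv

section BlockMatrix

variable {ι κ R : Type*} [Fintype ι] [DecidableEq ι] [Fintype κ] [DecidableEq κ] [CommRing R]

theorem det_comp_mul (N N' : Matrix ι ι (Matrix κ κ R)) :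
    (comp ι ι κ κ R (N * N')).det = (comp ι ι κ κ R N).det * (comp ι ι κ κ R N').det := by
  rw [← compRingEquiv_apply, map_mul, det_mul]
  rfl

theorem det_comp_of_blockLowerTriangular [LinearOrder ι] (N : Matrix ι ι (Matrix κ κ R))
    (h : ∀ i j, i < j → N i j = 0) :
    (comp ι ι κ κ R N).det = ∏ i, (N i i).det := by
  have hN : (comp ι ι κ κ R N).BlockTriangular fun p => OrderDual.toDual p.1 := fun p q hpq => by
    rw [comp_apply, h _ _ (OrderDual.toDual_lt_toDual.mp hpq), Matrix.zero_apply]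
  rw [hN.det_fintype]
  refine Fintype.prod_congr _ _ fun i => ?_
  let e : κ ≃ {p : ι × κ // OrderDual.toDual p.1 = i} :=
    { toFun := fun x => ⟨(i, x), rfl⟩
      invFun := fun p => p.1.2
      left_inv := fun _ => rfl
      right_inv := by rintro ⟨⟨j, x⟩, rfl⟩; rfl }
  rw [← det_submatrix_equiv_self e]
  rfl

theorem det_comp_one_updateCol [LinearOrder ι] (j₀ : ι) (hj₀ : ∀ i, j₀ ≤ i)
    (v : ι → Matrix κ κ R) :
    (comp ι ι κ κ R ((1 : Matrix ι ι (Matrix κ κ R)).updateCol j₀ v)).det = (v j₀).det := by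
  rw [det_comp_of_blockLowerTriangular]
  · rw [prod_eq_single j₀ (fun i _ hi => by simp [updateCol_ne hi]) (by simp)]
    simp
  · intro i j hij
    have hj : j ≠ j₀ := (lt_of_le_of_lt (hj₀ i) hij).ne'
    rw [updateCol_ne hj, one_apply_ne hij.ne]

theorem det_comp_submatrix_id (N : Matrix ι ι (Matrix κ κ R)) (e : Perm ι) :
    (comp ι ι κ κ R (N.submatrix id e)).det =
      ((Perm.sign e : ℤ) : R) ^ Fintype.card κ * (comp ι ι κ κ R N).det := by
  have : comp ι ι κ κ R (N.submatrix id e) =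
      (comp ι ι κ κ R N).submatrix id (prodCongrLeft fun _ => e) := rfl
  rw [this, det_permute', Perm.sign_prodCongrLeft]
  simp

theorem det_list_prod_map_range (f : ℕ → Matrix κ κ R) (k : ℕ) :
    (((List.range k).map f).prod).det = ∏ i ∈ range k, (f i).det := by
  rw [← coe_detMonoidHom, map_list_prod, List.map_map, prod_eq_multiset_prod, range_val,
    Multiset.range, Multiset.map_coe, Multiset.prod_coe]
  rfl

end BlockMatrix

section FromBlocks

variable {l n α : Type*} [Fintype l] [Fintype n] [NonUnitalNonAssocSemiring α]

theorem toBlocks₁₁_fromBlocks_mul (P : Matrix l l α) (Q : Matrix l n α) (R : Matrix n l α)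
    (S : Matrix n n α) (N : Matrix (l ⊕ n) (l ⊕ n) α) :
    (fromBlocks P Q R S * N).toBlocks₁₁ = P * N.toBlocks₁₁ + Q * N.toBlocks₂₁ := by
  conv_lhs => rw [← fromBlocks_toBlocks N, fromBlocks_multiply, toBlocks_fromBlocks₁₁]

theorem toBlocks₂₁_fromBlocks_mul (P : Matrix l l α) (Q : Matrix l n α) (R : Matrix n l α)
    (S : Matrix n n α) (N : Matrix (l ⊕ n) (l ⊕ n) α) :
    (fromBlocks P Q R S * N).toBlocks₂₁ = R * N.toBlocks₁₁ + S * N.toBlocks₂₁ := by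
  conv_lhs => rw [← fromBlocks_toBlocks N, fromBlocks_multiply, toBlocks_fromBlocks₂₁]

end FromBlocks

section Tridiagonal

variable {R : Type*} [CommRing R] {m : ℕ} (A B C : ℕ → Matrix (Fin m) (Fin m) R)

/-- `transferSeq A B C (k + 1)` is the paper's `Y_k`; `transferSeq A B C 0 = 0` stands for
`Y_{-1}`. -/
noncomputable def transferSeq : ℕ → Matrix (Fin m) (Fin m) R
  | 0 => 0
  | 1 => 1
  | k + 2 =>
    -(B (k + 1))⁻¹ * A (k + 1) * transferSeq (k + 1) + -(B (k + 1))⁻¹ * C k * transferSeq k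

theorem transferSeq_recurrence (k : ℕ) (hB : IsUnit (B (k + 1))) :
    B (k + 1) * transferSeq A B C (k + 2) + A (k + 1) * transferSeq A B C (k + 1) +
      C k * transferSeq A B C k = 0 := by
  have hB' := (isUnit_iff_isUnit_det _).mp hB
  rw [transferSeq]
  simp only [mul_add, neg_mul, mul_neg, Matrix.mul_assoc, mul_nonsing_inv_cancel_left _ _ hB']
  abel

def tridiagBlock (i k : ℕ) : Matrix (Fin m) (Fin m) R :=
  (if i = k then A (i + 1) else 0) + (if k = i + 1 then B (i + 1) else 0) +
    (if i = k + 1 then C i else 0)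

theorem sum_tridiagBlock_mul {n i : ℕ} (hi : i < n) (F : ℕ → Matrix (Fin m) (Fin m) R)
    (hF : F 0 = 0) :
    ∑ k ∈ range n, tridiagBlock A B C i k * F (k + 1) =
      (if i + 1 < n then B (i + 1) * F (i + 2) else 0) + A (i + 1) * F (i + 1) + C i * F i := by
  have hC : ∑ k ∈ range n, (if i = k + 1 then C i * F (k + 1) else 0) = C i * F i := by
    rcases i with _ | j
    · simp [hF]
    · simp only [add_left_inj]
      rw [sum_ite_eq, if_pos (mem_range.mpr (by omega))]
  simp only [tridiagBlock, add_mul, ite_mul, zero_mul, sum_add_distrib, hC, sum_ite_eq,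
    sum_ite_eq', mem_range, if_pos hi]
  abel

def tridiagBlocks (n : ℕ) : Matrix (Fin n) (Fin n) (Matrix (Fin m) (Fin m) R) :=
  of fun i k => tridiagBlock A B C i k

noncomputable def transferCol (n : ℕ) : Fin n → Matrix (Fin m) (Fin m) R :=
  fun k => transferSeq A B C (k + 1)

theorem tridiagBlocks_mulVec_transferCol {s : ℕ} (hB : ∀ i, 1 ≤ i → i ≤ s → IsUnit (B i))
    (i : Fin (s + 1)) :
    (tridiagBlocks A B C (s + 1) *ᵥ transferCol A B C (s + 1)) i =
      if i = Fin.last s then A (s + 1) * transferSeq A B C (s + 1) + C s * transferSeq A B C s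
      else 0 := by
  simp only [mulVec, dotProduct, tridiagBlocks, transferCol, of_apply]
  rw [Fin.sum_univ_eq_sum_range (fun k => tridiagBlock A B C i k * transferSeq A B C (k + 1)),
    sum_tridiagBlock_mul A B C i.is_lt _ rfl]
  by_cases hi : i = Fin.last s
  · subst hi
    simp
  · have hi' : (i : ℕ) < s := Fin.val_lt_last hi
    rw [if_pos (by omega), if_neg hi, ← transferSeq_recurrence A B C i (hB _ (by omega) hi')]

noncomputable def reducedBlocks (s : ℕ) :
    Matrix (Fin (s + 1)) (Fin (s + 1)) (Matrix (Fin m) (Fin m) R) :=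
  ((tridiagBlocks A B C (s + 1)).updateCol 0
    (tridiagBlocks A B C (s + 1) *ᵥ transferCol A B C (s + 1))).submatrix id (finRotate (s + 1))

theorem reducedBlocks_apply_of_ne_last {s : ℕ} (i : Fin (s + 1)) {j : Fin (s + 1)}
    (hj : j ≠ Fin.last s) :
    reducedBlocks A B C s i j = tridiagBlock A B C i (j + 1) := by
  have hj' : finRotate (s + 1) j ≠ 0 := by
    rw [← finRotate_last]; exact (finRotate (s + 1)).injective.ne hj
  simp only [reducedBlocks, submatrix_apply, id, updateCol_ne hj', tridiagBlocks, of_apply,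
    coe_finRotate_of_ne_last hj]

theorem reducedBlocks_apply_last {s : ℕ} (hB : ∀ i, 1 ≤ i → i ≤ s → IsUnit (B i))
    (i : Fin (s + 1)) :
    reducedBlocks A B C s i (Fin.last s) =
      if i = Fin.last s then A (s + 1) * transferSeq A B C (s + 1) + C s * transferSeq A B C s
      else 0 := by
  rw [reducedBlocks, submatrix_apply, id, finRotate_last, updateCol_self,
    tridiagBlocks_mulVec_transferCol A B C hB]

theorem reducedBlocks_eq_zero_of_lt {s : ℕ} (hB : ∀ i, 1 ≤ i → i ≤ s → IsUnit (B i))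
    {i j : Fin (s + 1)} (hij : i < j) :
    reducedBlocks A B C s i j = 0 := by
  by_cases hj : j = Fin.last s
  · rw [hj, reducedBlocks_apply_last A B C hB, if_neg (hj ▸ hij).ne]
  · rw [reducedBlocks_apply_of_ne_last A B C i hj, tridiagBlock]
    simp only [Fin.lt_def] at hij
    rw [if_neg (by omega), if_neg (by omega), if_neg (by omega), add_zero, add_zero]

theorem reducedBlocks_apply_self {s : ℕ} (hB : ∀ i, 1 ≤ i → i ≤ s → IsUnit (B i))
    (i : Fin (s + 1)) :
    reducedBlocks A B C s i i =
      if i = Fin.last s then A (s + 1) * transferSeq A B C (s + 1) + C s * transferSeq A B C s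
      else B (i + 1) := by
  by_cases hi : i = Fin.last s
  · rw [if_pos hi, hi, reducedBlocks_apply_last A B C hB, if_pos rfl]
  · rw [if_neg hi, reducedBlocks_apply_of_ne_last A B C i hi, tridiagBlock, if_neg (by omega),
      if_pos rfl, if_neg (by omega), zero_add, add_zero]

end Tridiagonal

section Transfer

variable {m : ℕ} (A B C : ℕ → Matrix (Fin m) (Fin m) ℂ)

theorem blockTridiag_eq_comp (n : ℕ) :
    blockTridiag m n A B C = comp (Fin n) (Fin n) (Fin m) (Fin m) ℂ (tridiagBlocks A B C n) := by
  ext p q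
  simp only [blockTridiag, tridiagBlocks, tridiagBlock, comp_apply, of_apply, Matrix.add_apply]
  split_ifs <;> rfl

theorem toBlocks₂₁_transfer0Aux_succ (k : ℕ) :
    (transfer0Aux m A B C (k + 1)).toBlocks₂₁ = (transfer0Aux m A B C k).toBlocks₁₁ := by
  rcases k with _ | k
  · simp [transfer0Aux, ← fromBlocks_one]
  · rw [transfer0Aux, toBlocks₂₁_fromBlocks_mul, Matrix.one_mul, Matrix.zero_mul, add_zero]

theorem toBlocks₁₁_transfer0Aux : ∀ k : ℕ,
    (transfer0Aux m A B C k).toBlocks₁₁ = transferSeq A B C (k + 1)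
  | 0 => by simp [transfer0Aux, transferSeq, ← fromBlocks_one]
  | 1 => by simp [transfer0Aux, transferSeq]
  | k + 2 => by
    rw [show k + 2 + 1 = k + 1 + 2 from rfl, transferSeq, transfer0Aux, toBlocks₁₁_fromBlocks_mul,
      toBlocks₂₁_transfer0Aux_succ, toBlocks₁₁_transfer0Aux (k + 1), toBlocks₁₁_transfer0Aux k]

theorem toBlocks₂₁_transfer0Aux (k : ℕ) :
    (transfer0Aux m A B C k).toBlocks₂₁ = transferSeq A B C k := by
  rcases k with _ | k
  · simp [transfer0Aux, transferSeq, ← fromBlocks_one]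
  · rw [toBlocks₂₁_transfer0Aux_succ, toBlocks₁₁_transfer0Aux]

theorem toBlocks₁₁_transfer0 (s : ℕ) :
    (transfer0 m (s + 1) A B C).toBlocks₁₁ =
      -(A (s + 1) * transferSeq A B C (s + 1) + C s * transferSeq A B C s) := by
  rw [transfer0, Nat.add_sub_cancel, toBlocks₁₁_fromBlocks_mul, toBlocks₁₁_transfer0Aux,
    toBlocks₂₁_transfer0Aux, neg_add, Matrix.neg_mul, Matrix.neg_mul]

end Transfer

theorem det_blockTridiag_general (m n : ℕ) (hn : 2 ≤ n)
    (A B C : ℕ → Matrix (Fin m) (Fin m) ℂ)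
    (hB : ∀ i, 1 ≤ i → i ≤ n - 1 → IsUnit (B i)) :
    (blockTridiag m n A B C).det =
      (-1 : ℂ) ^ (n * m) * (Matrix.toBlocks₁₁ (transfer0 m n A B C)).det *
        (((List.range (n - 1)).map (fun k => B (k + 1))).prod).det := by
  obtain ⟨s, rfl⟩ : ∃ s, n = s + 1 := ⟨n - 1, by omega⟩
  rw [Nat.add_sub_cancel] at hB ⊢
  have hW : (comp _ _ _ _ ℂ ((1 : Matrix (Fin (s + 1)) (Fin (s + 1)) _).updateCol 0
      (transferCol A B C (s + 1)))).det = 1 := by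
    rw [det_comp_one_updateCol 0 Fin.zero_le]
    simp [transferCol, transferSeq]
  have hReduced : (comp _ _ _ _ ℂ (reducedBlocks A B C s)).det =
      (∏ i ∈ range s, (B (i + 1)).det) * (-toBlocks₁₁ (transfer0 m (s + 1) A B C)).det := by
    rw [det_comp_of_blockLowerTriangular _ fun i j => reducedBlocks_eq_zero_of_lt A B C hB,
      Fin.prod_univ_castSucc, ← Fin.prod_univ_eq_prod_range, toBlocks₁₁_transfer0, neg_neg]
    simp [reducedBlocks_apply_self A B C hB, Fin.castSucc_ne_last]
  have hMW : tridiagBlocks A B C (s + 1) * (1 : Matrix (Fin (s + 1)) (Fin (s + 1)) _).updateCol 0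
      (transferCol A B C (s + 1)) = (tridiagBlocks A B C (s + 1)).updateCol 0
      (tridiagBlocks A B C (s + 1) *ᵥ transferCol A B C (s + 1)) := by
    rw [mul_updateCol, Matrix.mul_one]
  rw [reducedBlocks, det_comp_submatrix_id, ← hMW, det_comp_mul, hW, mul_one,
    ← blockTridiag_eq_comp, sign_finRotate, det_neg, Fintype.card_fin] at hReduced
  push_cast at hReduced
  have hSign : ((-1 : ℂ) ^ s) ^ m * ((-1 : ℂ) ^ s) ^ m = 1 := by
    rw [← mul_pow, ← pow_add, Even.neg_one_pow ⟨s, rfl⟩, one_pow]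
  rw [det_list_prod_map_range]
  linear_combination ((-1 : ℂ) ^ s) ^ m * hReduced - (blockTridiag m (s + 1) A B C).det * hSign

/-- Theorem 2: `det M⁰ = (-1)^{nm} · det (T⁰₁₁) · det (B_1 ⋯ B_{n-1})`, where `T⁰₁₁`
is the upper-left `m × m` block of `T⁰`. -/
theorem det_blockTridiag (m n : ℕ) (hm : 1 ≤ m) (hn : 2 ≤ n)
    (A B C : ℕ → Matrix (Fin m) (Fin m) ℂ)
    (hB : ∀ i, 1 ≤ i → i ≤ n - 1 → IsUnit (B i))
    (hC : ∀ i, 1 ≤ i → i ≤ n - 1 → IsUnit (C i)) :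
    (blockTridiag m n A B C).det =
      (-1 : ℂ) ^ (n * m) * (Matrix.toBlocks₁₁ (transfer0 m n A B C)).det *
        (((List.range (n - 1)).map (fun k => B (k + 1))).prod).det :=
  det_blockTridiag_general m n hn A B C hB
end

section
/- Suppose Ψ = (ψ_1,…,ψ_n) with each ψ_k ∈ ℂ^m satisfies M(z)Ψ = 0 for a nonzero complex number z. Then the transfer matrix T satisfies the eigenvalue equation T · (ψ_1, z⁻¹ψ_n)ᵀ = z · (ψ_1, z⁻¹ψ_n)ᵀ, where (ψ_1, z⁻¹ψ_n)ᵀ denotes the vector in ℂ^{2m} with first m components ψ_1 and last m components z⁻¹ψ_n. -/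
open Matrix

/-!
Continue `Ψ = (ψ_1, …, ψ_n)` by the Floquet condition to `ψ_0 = z⁻¹ ψ_n` and `ψ_{n+1} = z ψ_1`.
Then the block rows of `M(z) Ψ = 0` are exactly the three-term recurrence
`C_{k-1} ψ_{k-1} + A_k ψ_k + B_k ψ_{k+1} = 0` for `k = 1, …, n`, the corner blocks accounting
for `ψ_0` and `ψ_{n+1}`. Since `B_k` is invertible, the `k`-th factor of `T` maps
`(ψ_k, ψ_{k-1})` to `(ψ_{k+1}, ψ_k)`, so `T (ψ_1, ψ_0) = (ψ_{n+1}, ψ_n) = z (ψ_1, ψ_0)`.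
-/

theorem fromBlocks_transferStep_mulVec {R ι : Type*} [CommRing R] [Fintype ι] [DecidableEq ι]
    {A B C : Matrix ι ι R} {u v w : ι → R} (hB : IsUnit B)
    (h : C *ᵥ u + A *ᵥ v + B *ᵥ w = 0) :
    fromBlocks (-B⁻¹ * A) (-B⁻¹ * C) 1 0 *ᵥ Sum.elim v u = Sum.elim w v := by
  rw [fromBlocks_mulVec, Sum.elim_comp_inl, Sum.elim_comp_inr, one_mulVec, zero_mulVec, add_zero]
  congr 1
  calc (-B⁻¹ * A) *ᵥ v + (-B⁻¹ * C) *ᵥ u = B⁻¹ *ᵥ -(C *ᵥ u + A *ᵥ v) := by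
        simp only [neg_mul, neg_mulVec, ← mulVec_mulVec, mulVec_neg, mulVec_add]; abel
    _ = B⁻¹ *ᵥ (B *ᵥ w) := by rw [eq_neg_of_add_eq_zero_right h]
    _ = w := by rw [mulVec_mulVec, nonsing_inv_mul _ (B.isUnit_iff_isUnit_det.mp hB), one_mulVec]

theorem transfer_mulVec_of_recurrence {m : ℕ} {A B C : ℕ → Matrix (Fin m) (Fin m) ℂ}
    {ψ : ℕ → Fin m → ℂ} {N : ℕ} (hB : ∀ k < N, IsUnit (B (k + 1)))
    (hrec : ∀ k < N, C k *ᵥ ψ k + A (k + 1) *ᵥ ψ (k + 1) + B (k + 1) *ᵥ ψ (k + 2) = 0) :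
    transfer m A B C N *ᵥ Sum.elim (ψ 1) (ψ 0) = Sum.elim (ψ (N + 1)) (ψ N) := by
  induction N with
  | zero => simp [transfer]
  | succ N ih =>
    rw [transfer, ← mulVec_mulVec, ih (fun k hk => hB k (by omega)) (fun k hk => hrec k (by omega))]
    exact fromBlocks_transferStep_mulVec (hB N N.lt_succ_self) (hrec N N.lt_succ_self)

def blockVec {R κ : Type*} [Zero R] {n : ℕ} (Ψ : Fin n × κ → R) (j : ℕ) : κ → R :=
  fun a => if h : j < n then Ψ (⟨j, h⟩, a) else 0

theorem blockVec_of_le {R κ : Type*} [Zero R] {n : ℕ} (Ψ : Fin n × κ → R) {j : ℕ} (h : n ≤ j) :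
    blockVec Ψ j = 0 :=
  funext fun _ => dif_neg h.not_gt

/-- `floquetExt z Ψ k` is the paper's `ψ_k`: the block `k - 1` of `Ψ` for `1 ≤ k ≤ n`,
continued by `ψ_0 = z⁻¹ ψ_n` and `ψ_{n+1} = z ψ_1`; its values beyond `n + 1` are never used. -/
noncomputable def floquetExt {K κ : Type*} [DivisionRing K] {n : ℕ} (z : K) (Ψ : Fin n × κ → K) :
    ℕ → κ → K
  | 0 => z⁻¹ • blockVec Ψ (n - 1)
  | k + 1 => if k < n then blockVec Ψ k else z • blockVec Ψ 0

section floquetExt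
variable {K κ : Type*} [DivisionRing K] {n : ℕ} (z : K) (Ψ : Fin n × κ → K)

theorem floquetExt_zero : floquetExt z Ψ 0 = z⁻¹ • blockVec Ψ (n - 1) := rfl

theorem floquetExt_succ_of_lt {k : ℕ} (h : k < n) : floquetExt z Ψ (k + 1) = blockVec Ψ k :=
  if_pos h

theorem floquetExt_succ_self : floquetExt z Ψ (n + 1) = z • blockVec Ψ 0 :=
  if_neg (lt_irrefl n)

theorem floquetExt_succ_self_eq_smul : floquetExt z Ψ (n + 1) = z • floquetExt z Ψ 1 := by
  rcases n.eq_zero_or_pos with rfl | hn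
  · simp [floquetExt, blockVec_of_le Ψ (Nat.zero_le _)]
  · rw [floquetExt_succ_self, floquetExt_succ_of_lt z Ψ hn]

theorem floquetExt_self_eq_smul (hz : z ≠ 0) : floquetExt z Ψ n = z • floquetExt z Ψ 0 := by
  rcases n.eq_zero_or_pos with rfl | hn
  · simp [floquetExt, blockVec_of_le Ψ (Nat.zero_le _)]
  · rw [floquetExt_zero, smul_inv_smul₀ hz, ← floquetExt_succ_of_lt z Ψ (Nat.sub_one_lt_of_lt hn),
      Nat.sub_add_cancel hn]

end floquetExt

theorem sum_sum_ite_val_eq_mulVec_blockVec {R κ : Type*} [NonUnitalNonAssocSemiring R]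
    [Fintype κ] {n : ℕ} (Ψ : Fin n × κ → R) (X : Matrix κ κ R) (j : ℕ) (a : κ) :
    ∑ q : Fin n, ∑ b, (if (q : ℕ) = j then X a b else 0) * Ψ (q, b) = (X *ᵥ blockVec Ψ j) a := by
  by_cases hj : j < n
  · rw [Finset.sum_eq_single ⟨j, hj⟩ (fun q _ hq => by simp [Fin.ext_iff] at hq; simp [hq])
      (by simp)]
    simp [blockVec, hj, mulVec, dotProduct]
  · rw [blockVec_of_le Ψ (not_lt.mp hj), mulVec_zero]
    exact Finset.sum_eq_zero fun q _ => Finset.sum_eq_zero fun b _ => by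
      rw [if_neg (q.isLt.trans_le (not_lt.mp hj)).ne, zero_mul]

section rowSums
variable {K κ : Type*} [Field K] [Fintype κ] {n : ℕ} (z : K) (Ψ : Fin n × κ → K)
  (p : Fin n) (a : κ)

theorem sum_sum_superdiag_add_corner_eq_mulVec_floquetExt (B : ℕ → Matrix κ κ K) :
    ∑ q : Fin n, ∑ b, (if (q : ℕ) = p + 1 then B (p + 1) a b else 0) * Ψ (q, b) +
      ∑ q : Fin n, ∑ b, (if (p : ℕ) = n - 1 ∧ (q : ℕ) = 0 then z * B n a b else 0) * Ψ (q, b) =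
      (B (p + 1) *ᵥ floquetExt z Ψ (p + 2)) a := by
  rw [sum_sum_ite_val_eq_mulVec_blockVec]
  by_cases hp : (p : ℕ) + 1 < n
  · simp [show (p : ℕ) ≠ n - 1 by omega, floquetExt_succ_of_lt z Ψ hp]
  · have hcorner : ∀ (q : Fin n) b,
        (if (p : ℕ) = n - 1 ∧ (q : ℕ) = 0 then z * B n a b else 0) =
          if (q : ℕ) = 0 then (z • B n) a b else 0 := fun q b => by
      simp [show (p : ℕ) = n - 1 by omega]
    simp only [hcorner, sum_sum_ite_val_eq_mulVec_blockVec, show (p : ℕ) + 1 = n by omega,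
      show (p : ℕ) + 2 = n + 1 by omega, blockVec_of_le Ψ le_rfl, mulVec_zero,
      floquetExt_succ_self, smul_mulVec, mulVec_smul, Pi.zero_apply, zero_add]

theorem sum_sum_subdiag_add_corner_eq_mulVec_floquetExt (C : ℕ → Matrix κ κ K) :
    ∑ q : Fin n, ∑ b, (if (p : ℕ) = q + 1 then C p a b else 0) * Ψ (q, b) +
      ∑ q : Fin n, ∑ b, (if (p : ℕ) = 0 ∧ (q : ℕ) = n - 1 then z⁻¹ * C 0 a b else 0) * Ψ (q, b) =
      (C p *ᵥ floquetExt z Ψ p) a := by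
  rcases Nat.eq_zero_or_pos p with hp | hp
  · have hcorner : ∀ (q : Fin n) b,
        (if (p : ℕ) = 0 ∧ (q : ℕ) = n - 1 then z⁻¹ * C 0 a b else 0) =
          if (q : ℕ) = n - 1 then (z⁻¹ • C 0) a b else 0 := fun q b => by
      simp [hp]
    simp only [hcorner, sum_sum_ite_val_eq_mulVec_blockVec]
    simp only [hp, Nat.zero_ne_add_one, if_false, zero_mul, Finset.sum_const_zero, zero_add,
      floquetExt_zero, smul_mulVec, mulVec_smul]
  · have hshift : ∀ (q : Fin n) b, (if (p : ℕ) = q + 1 then C p a b else 0) =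
        if (q : ℕ) = p - 1 then C p a b else 0 := fun q b =>
      if_congr (by omega) rfl rfl
    have hψ : floquetExt z Ψ p = blockVec Ψ (p - 1) := by
      rw [← floquetExt_succ_of_lt z Ψ (by omega : (p : ℕ) - 1 < n), Nat.sub_add_cancel hp]
    simp only [hshift, hp.ne', false_and, if_false, zero_mul, Finset.sum_const_zero, add_zero,
      sum_sum_ite_val_eq_mulVec_blockVec, hψ]

end rowSums

theorem cornerMat_mulVec_apply (m n : ℕ) (z : ℂ) (A B C : ℕ → Matrix (Fin m) (Fin m) ℂ)
    (Ψ : Fin n × Fin m → ℂ) (p : Fin n) (a : Fin m) :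
    (cornerMat m n z A B C *ᵥ Ψ) (p, a) =
      (C p *ᵥ floquetExt z Ψ p + A (p + 1) *ᵥ floquetExt z Ψ (p + 1) +
        B (p + 1) *ᵥ floquetExt z Ψ (p + 2)) a := by
  have hdiag : ∑ q : Fin n, ∑ b, (if (p : ℕ) = q then A (p + 1) a b else 0) * Ψ (q, b) =
      (A (p + 1) *ᵥ floquetExt z Ψ (p + 1)) a := by
    simp only [eq_comm (a := (p : ℕ)), sum_sum_ite_val_eq_mulVec_blockVec,
      floquetExt_succ_of_lt z Ψ p.isLt]
  conv_lhs => simp only [mulVec, dotProduct, Fintype.sum_prod_type, cornerMat, add_mul,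
    Finset.sum_add_distrib]
  rw [Pi.add_apply, Pi.add_apply, ← hdiag,
    ← sum_sum_superdiag_add_corner_eq_mulVec_floquetExt,
    ← sum_sum_subdiag_add_corner_eq_mulVec_floquetExt]
  ring

/-- If `M(z) Ψ = 0` with `Ψ = (ψ_1, …, ψ_n)`, then the transfer matrix satisfies the
eigenvalue equation `T (ψ_1, z⁻¹ ψ_n)ᵀ = z (ψ_1, z⁻¹ ψ_n)ᵀ`. -/
theorem transfer_eigen_of_cornerMat_null (m n : ℕ) (hn : 2 ≤ n)
    (A B C : ℕ → Matrix (Fin m) (Fin m) ℂ)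
    (hB : ∀ i, 1 ≤ i → i ≤ n → IsUnit (B i))
    (z : ℂ) (hz : z ≠ 0)
    (Ψ : Fin n × Fin m → ℂ)
    (hΨ : cornerMat m n z A B C *ᵥ Ψ = 0) :
    transfer m A B C n *ᵥ
        Sum.elim (fun a => Ψ (⟨0, by omega⟩, a)) (fun a => z⁻¹ * Ψ (⟨n - 1, by omega⟩, a)) =
      z • Sum.elim (fun a => Ψ (⟨0, by omega⟩, a))
            (fun a => z⁻¹ * Ψ (⟨n - 1, by omega⟩, a)) := by
  have hrec : ∀ k < n, C k *ᵥ floquetExt z Ψ k + A (k + 1) *ᵥ floquetExt z Ψ (k + 1) +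
      B (k + 1) *ᵥ floquetExt z Ψ (k + 2) = 0 := fun k hk => funext fun a =>
    (cornerMat_mulVec_apply m n z A B C Ψ ⟨k, hk⟩ a).symm.trans (congrFun hΨ (⟨k, hk⟩, a))
  have hinit : Sum.elim (fun a => Ψ (⟨0, by omega⟩, a))
      (fun a => z⁻¹ * Ψ (⟨n - 1, by omega⟩, a)) =
        Sum.elim (floquetExt z Ψ 1) (floquetExt z Ψ 0) := by
    rw [floquetExt_zero, floquetExt_succ_of_lt z Ψ (by omega)]
    ext (a | a) <;> simp [blockVec, show n - 1 < n by omega, show 0 < n by omega]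
  rw [hinit, transfer_mulVec_of_recurrence (fun k hk => hB (k + 1) (by omega) (by omega)) hrec,
    floquetExt_succ_self_eq_smul, floquetExt_self_eq_smul z Ψ hz]
  ext (_ | _) <;> rfl
end

section
/- Suppose Ψ = (ψ_1,…,ψ_n) with each ψ_k ∈ ℂ^m is a nonzero vector satisfying M⁰Ψ = 0. Then the upper-left m×m block T⁰₁₁ of the transfer matrix T⁰ satisfies T⁰₁₁ ψ_1 = 0 and ψ_1 ≠ 0; in particular det T⁰₁₁ = 0. -/
open Matrix

lemma key_sum' {n m : ℕ} (c : ℕ) (D : Matrix (Fin m) (Fin m) ℂ)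
    (Ψ : Fin n × Fin m → ℂ) (a : Fin m) :
    ∑ j : Fin n, ∑ b : Fin m, (if (j : ℕ) = c then D a b else 0) * Ψ (j, b) =
      if h : c < n then ∑ b : Fin m, D a b * Ψ (⟨c, h⟩, b) else 0 := by
  have hj : ∀ j : Fin n, ∑ b : Fin m, (if (j : ℕ) = c then D a b else 0) * Ψ (j, b)
      = if (j : ℕ) = c then ∑ b : Fin m, D a b * Ψ (j, b) else 0 := by
    intro j; split_ifs with h <;> simp
  rw [Finset.sum_congr rfl fun j _ => hj j]
  split_ifs with h
  · rw [Finset.sum_eq_single (⟨c, h⟩ : Fin n)]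
    · simp
    · intro j _ hj'; rw [if_neg]; exact fun hc => hj' (Fin.ext hc)
    · simp
  · refine Finset.sum_eq_zero fun j _ => if_neg (fun hc => h ?_); omega

section main
variable {m n : ℕ} (A B C : ℕ → Matrix (Fin m) (Fin m) ℂ) (Ψ : Fin n × Fin m → ℂ)

/-- the extended-by-zero block components of `Ψ` -/
noncomputable def psiExt : ℕ → Fin m → ℂ :=
  fun i a => if h : i < n then Ψ (⟨i, h⟩, a) else 0

lemma row_eq (hΨ : blockTridiag m n A B C *ᵥ Ψ = 0) (i : ℕ) (hi : i < n) :
    A (i + 1) *ᵥ psiExt Ψ i + B (i + 1) *ᵥ psiExt Ψ (i + 1) +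
      (if i = 0 then 0 else C i *ᵥ psiExt Ψ (i - 1)) = 0 := by
  funext a
  have h := congrFun hΨ (⟨i, hi⟩, a)
  simp only [Matrix.mulVec, dotProduct, Pi.zero_apply, blockTridiag, add_mul] at h
  rw [Fintype.sum_prod_type] at h
  simp only [Finset.sum_add_distrib] at h
  -- three sums
  have e1 : ∑ j : Fin n, ∑ b : Fin m,
      (if i = (j : ℕ) then A (i + 1) a b else 0) * Ψ (j, b)
      = (A (i + 1) *ᵥ psiExt Ψ i) a := by
    simp only [show ∀ j : Fin n, (i = (j : ℕ)) ↔ ((j : ℕ) = i) from fun j => eq_comm]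
    rw [key_sum' i (A (i+1)) Ψ a, dif_pos hi]
    simp [Matrix.mulVec, dotProduct, psiExt, hi]
  have e2 : ∑ j : Fin n, ∑ b : Fin m,
      (if (j : ℕ) = i + 1 then B (i + 1) a b else 0) * Ψ (j, b)
      = (B (i + 1) *ᵥ psiExt Ψ (i + 1)) a := by
    rw [key_sum' (i+1) (B (i+1)) Ψ a]
    split_ifs with h'
    · simp [Matrix.mulVec, dotProduct, psiExt, h']
    · simp [Matrix.mulVec, dotProduct, psiExt, h']
  have e3 : ∑ j : Fin n, ∑ b : Fin m,
      (if i = (j : ℕ) + 1 then C i a b else 0) * Ψ (j, b)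
      = (if i = 0 then 0 else C i *ᵥ psiExt Ψ (i - 1)) a := by
    rcases Nat.eq_zero_or_pos i with h0 | h0
    · subst h0
      simp only [if_pos rfl, Pi.zero_apply]
      refine Finset.sum_eq_zero fun j _ => Finset.sum_eq_zero fun b _ => ?_
      rw [if_neg (by simp), zero_mul]
    · simp only [show ∀ j : Fin n, (i = (j : ℕ) + 1) ↔ ((j : ℕ) = i - 1)
        from fun j => by omega]
      rw [key_sum' (i-1) (C i) Ψ a, dif_pos (by omega), if_neg (by omega)]
      simp [Matrix.mulVec, dotProduct, psiExt, show i - 1 < n by omega]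
  rw [e1, e2, e3] at h
  simpa using h

end main

section main2
variable {m n : ℕ} (A B C : ℕ → Matrix (Fin m) (Fin m) ℂ) (Ψ : Fin n × Fin m → ℂ)

lemma solve_step {D : Matrix (Fin m) (Fin m) ℂ} (hu : IsUnit D.det) {x y : Fin m → ℂ}
    (h : y + D *ᵥ x = 0) : x = -(D⁻¹ *ᵥ y) := by
  have hD : D *ᵥ x = -y := eq_neg_of_add_eq_zero_right h
  calc x = D⁻¹ *ᵥ (D *ᵥ x) := by
            rw [Matrix.mulVec_mulVec, Matrix.nonsing_inv_mul _ hu, Matrix.one_mulVec]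
    _ = -(D⁻¹ *ᵥ y) := by rw [hD, Matrix.mulVec_neg]

lemma transfer_step (hn : 2 ≤ n)
    (hB : ∀ i, 1 ≤ i → i ≤ n - 1 → IsUnit (B i))
    (hΨ : blockTridiag m n A B C *ᵥ Ψ = 0) :
    ∀ k : ℕ, 1 ≤ k → k ≤ n - 1 →
      transfer0Aux m A B C k *ᵥ Sum.elim (psiExt Ψ 0) 0 =
        Sum.elim (psiExt Ψ k) (psiExt Ψ (k - 1)) := by
  intro k hk
  induction k, hk using Nat.le_induction with
  | base =>
    intro hk1
    have hu : IsUnit (B 1).det := (Matrix.isUnit_iff_isUnit_det _).mp (hB 1 le_rfl hk1)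
    have hr := row_eq A B C Ψ hΨ 0 (by omega)
    rw [if_pos rfl, add_zero] at hr
    have h1 : psiExt Ψ (0 + 1) = -((B 1)⁻¹ *ᵥ (A 1 *ᵥ psiExt Ψ 0)) := solve_step hu hr
    show transfer0Aux m A B C 1 *ᵥ _ = _
    rw [transfer0Aux, Matrix.fromBlocks_mulVec]
    funext s
    cases s with
    | inl a =>
      simp only [Sum.elim_inl, Sum.elim_comp_inl, Sum.elim_comp_inr, Matrix.mulVec_zero,
        add_zero, Matrix.neg_mul, Matrix.neg_mulVec, ← Matrix.mulVec_mulVec]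
      rw [show (1:ℕ) = 0 + 1 from rfl, h1]
    | inr a =>
      simp [Matrix.one_mulVec]
  | succ k hk1 ih =>
    intro hk2
    obtain ⟨j, rfl⟩ : ∃ j, k = j + 1 := ⟨k - 1, by omega⟩
    have hu : IsUnit (B (j + 2)).det :=
      (Matrix.isUnit_iff_isUnit_det _).mp (hB (j + 2) (by omega) (by omega))
    have hr := row_eq A B C Ψ hΨ (j + 1) (by omega)
    rw [if_neg (by omega), add_right_comm] at hr
    have h1 : psiExt Ψ (j + 1 + 1) =
        -((B (j + 2))⁻¹ *ᵥ (A (j + 2) *ᵥ psiExt Ψ (j + 1) + C (j + 1) *ᵥ psiExt Ψ j)) := by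
      have := solve_step hu hr
      simpa using this
    show transfer0Aux m A B C (j + 2) *ᵥ _ = _
    rw [transfer0Aux, ← Matrix.mulVec_mulVec, ih (by omega), Matrix.fromBlocks_mulVec]
    funext s
    cases s with
    | inl a =>
      simp only [Sum.elim_inl, Sum.elim_comp_inl, Sum.elim_comp_inr, Nat.add_sub_cancel]
      have : (-(B (j + 2))⁻¹ * A (j + 2)) *ᵥ psiExt Ψ (j + 1) +
          (-(B (j + 2))⁻¹ * C (j + 1)) *ᵥ psiExt Ψ j =
          -((B (j + 2))⁻¹ *ᵥ (A (j + 2) *ᵥ psiExt Ψ (j + 1) + C (j + 1) *ᵥ psiExt Ψ j)) := by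
        simp only [Matrix.neg_mul, Matrix.neg_mulVec, ← Matrix.mulVec_mulVec,
          Matrix.mulVec_add, neg_add]
      rw [this, ← h1]
    | inr a =>
      simp [Matrix.one_mulVec, Nat.add_sub_cancel]

lemma toBlocks11_mulVec (T : Matrix (Fin m ⊕ Fin m) (Fin m ⊕ Fin m) ℂ) (x : Fin m → ℂ) :
    Matrix.toBlocks₁₁ T *ᵥ x = fun a => (T *ᵥ Sum.elim x 0) (Sum.inl a) := by
  funext a
  simp [Matrix.toBlocks₁₁, Matrix.mulVec, dotProduct, Fintype.sum_sum_type]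

end main2
/-- If `Ψ = (ψ_1, …, ψ_n) ≠ 0` satisfies `M⁰ Ψ = 0`, then the upper-left block `T⁰₁₁`
of the transfer matrix satisfies `T⁰₁₁ ψ_1 = 0` with `ψ_1 ≠ 0`; in particular
`det T⁰₁₁ = 0`. -/
theorem toBlocks₁₁_transfer0_null (m n : ℕ) (hm : 1 ≤ m) (hn : 2 ≤ n)
    (A B C : ℕ → Matrix (Fin m) (Fin m) ℂ)
    (hB : ∀ i, 1 ≤ i → i ≤ n - 1 → IsUnit (B i))
    (hC : ∀ i, 1 ≤ i → i ≤ n - 1 → IsUnit (C i))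
    (Ψ : Fin n × Fin m → ℂ) (hΨ0 : Ψ ≠ 0)
    (hΨ : blockTridiag m n A B C *ᵥ Ψ = 0) :
    Matrix.toBlocks₁₁ (transfer0 m n A B C) *ᵥ (fun a => Ψ (⟨0, by omega⟩, a)) = 0 ∧
      (fun a => Ψ (⟨0, by omega⟩, a)) ≠ (0 : Fin m → ℂ) ∧
      (Matrix.toBlocks₁₁ (transfer0 m n A B C)).det = 0 := by
  have hn0 : 0 < n := by omega
  have hc : psiExt Ψ 0 = (fun a => Ψ (⟨0, by omega⟩, a)) := by
    funext a; simp [psiExt, hn0]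
  rw [← hc]
  have hz : psiExt Ψ n = (0 : Fin m → ℂ) := by funext a; simp [psiExt]
  have hr := row_eq A B C Ψ hΨ (n - 1) (by omega)
  rw [if_neg (by omega), show n - 1 + 1 = n from by omega, hz, Matrix.mulVec_zero,
    add_zero] at hr
  have hfin : transfer0 m n A B C *ᵥ Sum.elim (psiExt Ψ 0) 0 =
      Sum.elim (0 : Fin m → ℂ) (psiExt Ψ (n - 1)) := by
    rw [transfer0, ← Matrix.mulVec_mulVec,
      transfer_step A B C Ψ hn hB hΨ (n - 1) (by omega) le_rfl, Matrix.fromBlocks_mulVec]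
    funext s
    cases s with
    | inl a =>
      simp only [Sum.elim_inl, Sum.elim_comp_inl, Sum.elim_comp_inr, Matrix.neg_mulVec]
      have h0 : -(A n *ᵥ psiExt Ψ (n - 1)) + -(C (n - 1) *ᵥ psiExt Ψ (n - 1 - 1)) =
          (0 : Fin m → ℂ) := by
        rw [← neg_add, hr, neg_zero]
      rw [h0]
    | inr a =>
      simp [Matrix.one_mulVec]
  have h11 : Matrix.toBlocks₁₁ (transfer0 m n A B C) *ᵥ psiExt Ψ 0 = 0 := by
    rw [toBlocks11_mulVec, hfin]
    funext a; simp
  have hne : psiExt Ψ 0 ≠ (0 : Fin m → ℂ) := by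
    intro h0
    apply hΨ0
    have hS : Sum.elim (psiExt Ψ 0) (0 : Fin m → ℂ) = 0 := by
      rw [h0]; funext s; cases s <;> rfl
    have hzero : ∀ i : ℕ, i < n → psiExt Ψ i = (0 : Fin m → ℂ) := by
      intro i hi
      rcases Nat.eq_zero_or_pos i with h | h
      · subst h; exact h0
      · have ht := transfer_step A B C Ψ hn hB hΨ i h (by omega)
        rw [hS, Matrix.mulVec_zero] at ht
        funext a
        exact (congrFun ht (Sum.inl a)).symm
    funext p
    obtain ⟨⟨i, hi⟩, a⟩ := p
    have := congrFun (hzero i hi) a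
    simpa [psiExt, hi] using this
  exact ⟨h11, hne, Matrix.exists_mulVec_eq_zero_iff.mp ⟨psiExt Ψ 0, hne, h11⟩⟩
end

section
/- Suppose that the upper-left m×m blocks T(k)₁₁ of the partial transfer-matrix products are invertible for k = 1,…,n-1, and define Λ_k = -B_k · T(k)₁₁ · (T(k-1)₁₁)⁻¹ for k = 1,…,n-1 and Λ_n = A_n - C_{n-1} Λ_{n-1}⁻¹ B_{n-1} (assuming each Λ_k is invertible for k < n). Then Λ_1 = A_1 and Λ_k = A_k - C_{k-1} Λ_{k-1}⁻¹ B_{k-1} for k = 2,…,n, i.e., the Λ_k satisfy Salkuyeh's recursion for the block-LU pivots of M⁰. -/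
open Matrix

private lemma transfer0Aux_toBlocks₂₁ (m : ℕ) (A B C : ℕ → Matrix (Fin m) (Fin m) ℂ) :
    ∀ k, 1 ≤ k →
      Matrix.toBlocks₂₁ (transfer0Aux m A B C k) =
        Matrix.toBlocks₁₁ (transfer0Aux m A B C (k - 1)) := by
  intro k hk
  match k, hk with
  | 1, _ =>
      show Matrix.toBlocks₂₁ (transfer0Aux m A B C 1) = Matrix.toBlocks₁₁ (transfer0Aux m A B C 0)
      rw [transfer0Aux, transfer0Aux, Matrix.toBlocks_fromBlocks₂₁, ← Matrix.fromBlocks_one,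
        Matrix.toBlocks_fromBlocks₁₁]
  | (j + 2), _ =>
      show Matrix.toBlocks₂₁ (transfer0Aux m A B C (j + 2))
          = Matrix.toBlocks₁₁ (transfer0Aux m A B C (j + 1))
      rw [transfer0Aux]
      conv_lhs => rw [← Matrix.fromBlocks_toBlocks (transfer0Aux m A B C (j + 1)),
        Matrix.fromBlocks_multiply, Matrix.toBlocks_fromBlocks₂₁]
      simp

private lemma transfer0Aux_toBlocks₁₁_rec (m : ℕ) (A B C : ℕ → Matrix (Fin m) (Fin m) ℂ)
    (j : ℕ) :
    Matrix.toBlocks₁₁ (transfer0Aux m A B C (j + 2)) =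
      -(B (j + 2))⁻¹ * A (j + 2) * Matrix.toBlocks₁₁ (transfer0Aux m A B C (j + 1)) +
        (-(B (j + 2))⁻¹ * C (j + 1)) * Matrix.toBlocks₁₁ (transfer0Aux m A B C j) := by
  rw [transfer0Aux]
  conv_lhs => rw [← Matrix.fromBlocks_toBlocks (transfer0Aux m A B C (j + 1)),
    Matrix.fromBlocks_multiply, Matrix.toBlocks_fromBlocks₁₁]
  have h21 := transfer0Aux_toBlocks₂₁ m A B C (j + 1) (Nat.le_add_left 1 j)
  simp only [Nat.add_sub_cancel] at h21
  rw [h21]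

/-- If `Λ_k = -B_k · T(k)₁₁ · (T(k-1)₁₁)⁻¹` for `k = 1, …, n-1` (with each `T(k)₁₁`
invertible) and `Λ_n = A_n - C_{n-1} Λ_{n-1}⁻¹ B_{n-1}`, then `Λ_1 = A_1` and
`Λ_k = A_k - C_{k-1} Λ_{k-1}⁻¹ B_{k-1}` for `k = 2, …, n`; i.e. the `Λ_k` satisfy
Salkuyeh's recursion for the block-LU pivots of `M⁰`. -/
theorem lambda_salkuyeh_recursion (m n : ℕ) (hm : 1 ≤ m) (hn : 2 ≤ n)
    (A B C : ℕ → Matrix (Fin m) (Fin m) ℂ)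
    (hB : ∀ i, 1 ≤ i → i ≤ n - 1 → IsUnit (B i))
    (hC : ∀ i, 1 ≤ i → i ≤ n - 1 → IsUnit (C i))
    (hT : ∀ k, 1 ≤ k → k ≤ n - 1 → IsUnit (Matrix.toBlocks₁₁ (transfer0Aux m A B C k)))
    (Λ : ℕ → Matrix (Fin m) (Fin m) ℂ)
    (hΛdef : ∀ k, 1 ≤ k → k ≤ n - 1 →
      Λ k = -(B k) * Matrix.toBlocks₁₁ (transfer0Aux m A B C k) *
              (Matrix.toBlocks₁₁ (transfer0Aux m A B C (k - 1)))⁻¹)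
    (hΛinv : ∀ k, 1 ≤ k → k ≤ n - 1 → IsUnit (Λ k))
    (hΛn : Λ n = A n - C (n - 1) * (Λ (n - 1))⁻¹ * B (n - 1)) :
    Λ 1 = A 1 ∧
      ∀ k, 2 ≤ k → k ≤ n → Λ k = A k - C (k - 1) * (Λ (k - 1))⁻¹ * B (k - 1) := by
  have hn1 : 1 ≤ n - 1 := by omega
  have hT0 : Matrix.toBlocks₁₁ (transfer0Aux m A B C 0) = 1 := by
    rw [transfer0Aux, ← Matrix.fromBlocks_one, Matrix.toBlocks_fromBlocks₁₁]
  have hT1 : Matrix.toBlocks₁₁ (transfer0Aux m A B C 1) = -(B 1)⁻¹ * A 1 := by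
    rw [transfer0Aux, Matrix.toBlocks_fromBlocks₁₁]
  have hΛ1 : Λ 1 = A 1 := by
    have e := hΛdef 1 le_rfl hn1
    norm_num at e
    rw [e, hT1, hT0, inv_one, mul_one, neg_mul, mul_neg, neg_neg, ← mul_assoc,
      Matrix.mul_nonsing_inv _ ((Matrix.isUnit_iff_isUnit_det _).mp (hB 1 le_rfl hn1)), one_mul]
  refine ⟨hΛ1, ?_⟩
  intro k hk2 hkn
  rcases eq_or_lt_of_le hkn with rfl | hlt
  · exact hΛn
  · have hk : k ≤ n - 1 := by omega
    obtain ⟨j, rfl⟩ : ∃ j, k = j + 2 := ⟨k - 2, by omega⟩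
    set P := Matrix.toBlocks₁₁ (transfer0Aux m A B C j) with hPdef
    set Q := Matrix.toBlocks₁₁ (transfer0Aux m A B C (j + 1)) with hQdef
    have hQunit : IsUnit Q := hT (j + 1) (by omega) (by omega)
    have hPunit : IsUnit P := by
      rcases j with _ | i
      · rw [hPdef, hT0]; exact isUnit_one
      · exact hT (i + 1) (by omega) (by omega)
    have hBk : IsUnit (B (j + 2)) := hB _ (by omega) hk
    have hBk1 : IsUnit (B (j + 1)) := hB _ (by omega) (by omega)
    have hP1 : P⁻¹ * P = 1 :=
      Matrix.nonsing_inv_mul _ ((Matrix.isUnit_iff_isUnit_det _).mp hPunit)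
    have hQ1 : Q * Q⁻¹ = 1 :=
      Matrix.mul_nonsing_inv _ ((Matrix.isUnit_iff_isUnit_det _).mp hQunit)
    have hB1 : B (j + 1) * (B (j + 1))⁻¹ = 1 :=
      Matrix.mul_nonsing_inv _ ((Matrix.isUnit_iff_isUnit_det _).mp hBk1)
    have hB2 : B (j + 2) * (B (j + 2))⁻¹ = 1 :=
      Matrix.mul_nonsing_inv _ ((Matrix.isUnit_iff_isUnit_det _).mp hBk)
    have eΛk := hΛdef (j + 2) (by omega) hk
    have eΛk1 := hΛdef (j + 1) (by omega) (by omega)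
    simp only [show j + 2 - 1 = j + 1 from rfl, show j + 1 - 1 = j from rfl, ← hPdef, ← hQdef] at eΛk eΛk1
    have hinv : (Λ (j + 1))⁻¹ = -(P * Q⁻¹ * (B (j + 1))⁻¹) := by
      apply Matrix.inv_eq_right_inv
      rw [eΛk1]
      simp only [neg_mul, mul_neg, neg_neg]
      calc B (j + 1) * Q * P⁻¹ * (P * Q⁻¹ * (B (j + 1))⁻¹)
          = B (j + 1) * Q * (P⁻¹ * P) * (Q⁻¹ * (B (j + 1))⁻¹) := by
            simp only [mul_assoc]
        _ = 1 := by rw [hP1, mul_one, mul_assoc, ← mul_assoc Q, hQ1, one_mul, hB1]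
    simp only [show j + 2 - 1 = j + 1 from rfl]
    rw [eΛk, hinv, transfer0Aux_toBlocks₁₁_rec m A B C j, ← hPdef, ← hQdef]
    have key : -B (j + 2) * (-(B (j + 2))⁻¹ * A (j + 2) * Q + -(B (j + 2))⁻¹ * C (j + 1) * P)
        = A (j + 2) * Q + C (j + 1) * P := by
      simp only [neg_mul, mul_neg, neg_neg, mul_add, ← mul_assoc]
      rw [hB2, one_mul, one_mul]
    have hB1' : (B (j + 1))⁻¹ * B (j + 1) = 1 :=
      Matrix.nonsing_inv_mul _ ((Matrix.isUnit_iff_isUnit_det _).mp hBk1)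
    rw [key, mul_neg, neg_mul, sub_neg_eq_add, add_mul, mul_assoc (A (j + 2)), hQ1, mul_one,
      mul_assoc (C (j + 1)),
      mul_assoc (C (j + 1)) (P * Q⁻¹ * (B (j + 1))⁻¹) (B (j + 1)),
      mul_assoc (P * Q⁻¹) ((B (j + 1))⁻¹) (B (j + 1)), hB1', mul_one]
end

section
/- (n = 2 case, Lee–Ioannopoulos) Let A_1, A_2 be complex m×m matrices and B_1, B_2, C_0, C_1 invertible complex m×m matrices, and for z ≠ 0 let M(z) be the 2m×2m matrix [[A_1, B_1 + z⁻¹C_0],[C_1 + zB_2, A_2]]. Then for every complex λ and every nonzero complex z, det(λI_{2m} - M(z)) = (-z)^{-m} · det(T(λ) - zI_{2m}) · det(B_1 B_2), where T(λ) = [[-B_2⁻¹(A_2 - λI_m), -B_2⁻¹C_1],[I_m, 0]] · [[-B_1⁻¹(A_1 - λI_m), -B_1⁻¹C_0],[I_m, 0]]. -/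
/-!
With `T_j(λ) = [[-B_j⁻¹(A_j - λ), -B_j⁻¹C_{j-1}], [1, 0]]`, one checks blockwise the factorization
`T_2 T_1 - z = [[0, B_2⁻¹], [B_1⁻¹, 0]] · [[1, 0], [-(A_2 - λ)B_1⁻¹, 1]] · (λ - M(z)) · diag(1, z)`,
which uses only `B_j⁻¹ B_j = 1` and `z z⁻¹ = 1`. Taking determinants, the antidiagonal factor
contributes `(-1)^m det(B_1 B_2)⁻¹`, the shear `1` and the diagonal factor `z^m`.
-/

open Matrix

section
variable {R : Type*} [CommRing R] {n : Type*} [Fintype n] [DecidableEq n]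

theorem det_fromBlocks_zero_one_one_zero :
    (fromBlocks 0 1 1 0 : Matrix (n ⊕ n) (n ⊕ n) R).det = (-1) ^ Fintype.card n := by
  -- a block swap is, up to the sign of one block, a product of three shears
  have h : (fromBlocks 0 1 1 0 : Matrix (n ⊕ n) (n ⊕ n) R) =
      fromBlocks (-1) 0 0 1 *
        (fromBlocks 1 (-1) 0 1 * (fromBlocks 1 0 1 1 * fromBlocks 1 (-1) 0 1)) := by
    simp [fromBlocks_multiply]
  rw [h]
  simp [det_neg]

theorem det_fromBlocks_zero₁₁_zero₂₂ (B C : Matrix n n R) :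
    (fromBlocks 0 B C 0).det = (-1) ^ Fintype.card n * B.det * C.det := by
  have h : fromBlocks 0 B C 0 = fromBlocks B 0 0 C * fromBlocks 0 1 1 0 := by
    simp [fromBlocks_multiply]
  rw [h, det_mul, det_fromBlocks_zero₂₁, det_fromBlocks_zero_one_one_zero]
  ring

end

variable {K : Type*} [Field K] {n : Type*} [Fintype n] [DecidableEq n]

noncomputable def transferMatrix (A B C : Matrix n n K) (lam : K) : Matrix (n ⊕ n) (n ⊕ n) K :=
  fromBlocks (-B⁻¹ * (A - lam • 1)) (-B⁻¹ * C) 1 0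

theorem transferMatrix_mul_transferMatrix_sub_smul_one (A₁ A₂ B₁ B₂ C₀ C₁ : Matrix n n K)
    (hB₁ : IsUnit B₁) (hB₂ : IsUnit B₂) (lam z : K) (hz : z ≠ 0) :
    transferMatrix A₂ B₂ C₁ lam * transferMatrix A₁ B₁ C₀ lam - z • 1 =
      fromBlocks 0 B₂⁻¹ B₁⁻¹ 0 * fromBlocks 1 0 (-((A₂ - lam • 1) * B₁⁻¹)) 1 *
        (lam • 1 - fromBlocks A₁ (B₁ + z⁻¹ • C₀) (C₁ + z • B₂) A₂) *
        fromBlocks 1 0 0 (z • 1) := by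
  have h₁ : B₁⁻¹ * B₁ = 1 := nonsing_inv_mul _ ((isUnit_iff_isUnit_det _).mp hB₁)
  have h₂ : B₂⁻¹ * B₂ = 1 := nonsing_inv_mul _ ((isUnit_iff_isUnit_det _).mp hB₂)
  rw [transferMatrix, transferMatrix, ← fromBlocks_one, fromBlocks_smul, fromBlocks_smul]
  simp only [fromBlocks_multiply, sub_eq_add_neg, fromBlocks_neg, fromBlocks_add, fromBlocks_inj]
  refine ⟨?_, ?_, ?_, ?_⟩ <;>
    simp only [Matrix.mul_add, Matrix.add_mul, Matrix.mul_neg, Matrix.neg_mul,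
      Matrix.mul_smul, Matrix.smul_mul, Matrix.mul_one, Matrix.one_mul, Matrix.mul_zero,
      Matrix.zero_mul, Matrix.mul_assoc, h₁, h₂, smul_smul, mul_inv_cancel₀ hz,
      mul_inv_cancel_left₀ hz, one_smul, smul_zero, smul_add, smul_neg]
  all_goals abel

theorem det_smul_one_sub_fromBlocks_eq_transferMatrix_det (A₁ A₂ B₁ B₂ C₀ C₁ : Matrix n n K)
    (hB₁ : IsUnit B₁) (hB₂ : IsUnit B₂) (lam z : K) (hz : z ≠ 0) :
    (lam • 1 - fromBlocks A₁ (B₁ + z⁻¹ • C₀) (C₁ + z • B₂) A₂).det =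
      (-z) ^ (-(Fintype.card n : ℤ)) *
        (transferMatrix A₂ B₂ C₁ lam * transferMatrix A₁ B₁ C₀ lam - z • 1).det *
        (B₁ * B₂).det := by
  have hd₁ := (isUnit_iff_isUnit_det B₁).mp hB₁
  have hd₂ := (isUnit_iff_isUnit_det B₂).mp hB₂
  rw [transferMatrix_mul_transferMatrix_sub_smul_one _ _ _ _ _ _ hB₁ hB₂ lam z hz, det_mul,
    det_mul, det_mul, det_mul, det_fromBlocks_zero₁₁_zero₂₂, det_fromBlocks_zero₁₂,
    det_fromBlocks_zero₂₁, det_nonsing_inv, det_nonsing_inv, det_smul, det_one,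
    Ring.inverse_eq_inv', _root_.zpow_neg, zpow_natCast, neg_pow]
  field_simp [hd₁.ne_zero, hd₂.ne_zero]

theorem duality_relation_n2_general (m : ℕ)
    (A₁ A₂ B₁ B₂ C₀ C₁ : Matrix (Fin m) (Fin m) ℂ)
    (hB₁ : IsUnit B₁) (hB₂ : IsUnit B₂)
    (lam : ℂ) (z : ℂ) (hz : z ≠ 0) :
    (lam • (1 : Matrix ((Fin m) ⊕ (Fin m)) ((Fin m) ⊕ (Fin m)) ℂ) -
        Matrix.fromBlocks A₁ (B₁ + z⁻¹ • C₀) (C₁ + z • B₂) A₂).det =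
      (-z) ^ (-(m : ℤ)) *
        ((Matrix.fromBlocks (-B₂⁻¹ * (A₂ - lam • (1 : Matrix (Fin m) (Fin m) ℂ)))
              (-B₂⁻¹ * C₁) 1 0 *
            Matrix.fromBlocks (-B₁⁻¹ * (A₁ - lam • (1 : Matrix (Fin m) (Fin m) ℂ)))
              (-B₁⁻¹ * C₀) 1 0 -
            z • (1 : Matrix ((Fin m) ⊕ (Fin m)) ((Fin m) ⊕ (Fin m)) ℂ)).det) *
        (B₁ * B₂).det := by
  simpa only [Fintype.card_fin, transferMatrix] using
    det_smul_one_sub_fromBlocks_eq_transferMatrix_det A₁ A₂ B₁ B₂ C₀ C₁ hB₁ hB₂ lam z hz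

/-- The `n = 2` case of the duality relation (Lee–Ioannopoulos): for
`M(z) = [[A_1, B_1 + z⁻¹ C_0], [C_1 + z B_2, A_2]]` and
`T(λ) = [[-B_2⁻¹(A_2 - λ I_m), -B_2⁻¹ C_1], [I_m, 0]] · [[-B_1⁻¹(A_1 - λ I_m), -B_1⁻¹ C_0], [I_m, 0]]`,
one has `det (λ I_{2m} - M(z)) = (-z)^{-m} · det (T(λ) - z I_{2m}) · det (B_1 B_2)`. -/
theorem duality_relation_n2 (m : ℕ) (hm : 1 ≤ m)
    (A₁ A₂ B₁ B₂ C₀ C₁ : Matrix (Fin m) (Fin m) ℂ)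
    (hB₁ : IsUnit B₁) (hB₂ : IsUnit B₂) (hC₀ : IsUnit C₀) (hC₁ : IsUnit C₁)
    (lam : ℂ) (z : ℂ) (hz : z ≠ 0) :
    (lam • (1 : Matrix ((Fin m) ⊕ (Fin m)) ((Fin m) ⊕ (Fin m)) ℂ) -
        Matrix.fromBlocks A₁ (B₁ + z⁻¹ • C₀) (C₁ + z • B₂) A₂).det =
      (-z) ^ (-(m : ℤ)) *
        ((Matrix.fromBlocks (-B₂⁻¹ * (A₂ - lam • (1 : Matrix (Fin m) (Fin m) ℂ)))
              (-B₂⁻¹ * C₁) 1 0 *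
            Matrix.fromBlocks (-B₁⁻¹ * (A₁ - lam • (1 : Matrix (Fin m) (Fin m) ℂ)))
              (-B₁⁻¹ * C₀) 1 0 -
            z • (1 : Matrix ((Fin m) ⊕ (Fin m)) ((Fin m) ⊕ (Fin m)) ℂ)).det) *
        (B₁ * B₂).det :=
  duality_relation_n2_general m A₁ A₂ B₁ B₂ C₀ C₁ hB₁ hB₂ lam z hz
end
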